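/- Let X be a real Hilbert space, Ψ : X → (-∞, ∞] a proper lower semicontinuous convex function, and K ⊂ X a closed convex cone with vertex 0 such that for all z ∈ D(Ψ) and w ∈ D(Ψ), Ψ(z - π_K(z - w)) + Ψ(w + π_K(z - w)) ≤ Ψ(z) + Ψ(w), where π_K is the orthogonal projection onto K. Then the subdifferential ∂Ψ is K-monotone: for all [z₁, z₁*] ∈ ∂Ψ and [z₂, z₂*] ∈ ∂Ψ, one has (z₁* - z₂*, (z₁ - z₂) - π_K(z₁ - z₂))_X ≥ 0. -/

import Mathlib

noncomputable section
open MeasureTheory Filter Topology Set Metric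
open scoped RealInnerProductSpace ENNReal NNReal

abbrev Euc (n : ℕ) := EuclideanSpace ℝ (Fin n)

def divg {n : ℕ} (ψ : Euc n → Euc n) (x : Euc n) : ℝ :=
  ∑ i, ⟪fderiv ℝ ψ x (EuclideanSpace.single i 1), EuclideanSpace.single i 1⟫

def IsTestVF {n : ℕ} (U : Set (Euc n)) (ψ : Euc n → Euc n) : Prop :=
  ContDiff ℝ (⊤ : ℕ∞) ψ ∧ HasCompactSupport ψ ∧ tsupport ψ ⊆ U

def HasWeakGradOn {n : ℕ} (u : Euc n → ℝ) (G : Euc n → Euc n) (U : Set (Euc n)) : Prop :=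
  ∀ ψ : Euc n → Euc n, IsTestVF U ψ →
    ∫ x in U, u x * divg ψ x = - ∫ x in U, ⟪G x, ψ x⟫

def TraceEq {n : ℕ} (Ω : Set (Euc n)) (μΓ : Measure (Euc n)) (nΓ : Euc n → Euc n)
    (u : Euc n → ℝ) (G : Euc n → Euc n) (uΓ : Euc n → ℝ) : Prop :=
  ∀ ψ : Euc n → Euc n, ContDiff ℝ (⊤ : ℕ∞) ψ → HasCompactSupport ψ →
    ∫ x, uΓ x * ⟪ψ x, nΓ x⟫ ∂μΓ =
      (∫ x in Ω, u x * divg ψ x) + ∫ x in Ω, ⟪G x, ψ x⟫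

def BVTraceEq {n : ℕ} (Ω : Set (Euc n)) (μΓ : Measure (Euc n)) (nΓ : Euc n → Euc n)
    (u : Euc n → ℝ) (ν : Measure (Euc n)) (σ : Euc n → Euc n) (uΓ : Euc n → ℝ) : Prop :=
  ∀ ψ : Euc n → Euc n, ContDiff ℝ (⊤ : ℕ∞) ψ → HasCompactSupport ψ →
    ∫ x, uΓ x * ⟪ψ x, nΓ x⟫ ∂μΓ =
      (∫ x in Ω, u x * divg ψ x) + ∫ x, ⟪σ x, ψ x⟫ ∂ν

def tangDiv {n : ℕ} (nΓ : Euc n → Euc n) (ψ : Euc n → Euc n) (x : Euc n) : ℝ :=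
  divg ψ x - ⟪fderiv ℝ ψ x (nΓ x), nΓ x⟫

def HasSurfGrad {n : ℕ} (Γ : Set (Euc n)) (μΓ : Measure (Euc n)) (nΓ : Euc n → Euc n)
    (u : Euc n → ℝ) (G : Euc n → Euc n) : Prop :=
  ∀ ψ : Euc n → Euc n, ContDiff ℝ (⊤ : ℕ∞) ψ → HasCompactSupport ψ →
    (∀ x ∈ Γ, ⟪ψ x, nΓ x⟫ = 0) →
    ∫ x, u x * tangDiv nΓ ψ x ∂μΓ = - ∫ x, ⟪G x, ψ x⟫ ∂μΓ

def GaussGreen {n : ℕ} (Ω : Set (Euc n)) (μΓ : Measure (Euc n)) (nΓ : Euc n → Euc n) : Prop :=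
  ∀ v : Euc n → ℝ, ContDiff ℝ (⊤ : ℕ∞) v → ∀ ψ : Euc n → Euc n, ContDiff ℝ (⊤ : ℕ∞) ψ → HasCompactSupport ψ →
    ∫ x, v x * ⟪ψ x, nΓ x⟫ ∂μΓ =
      (∫ x in Ω, v x * divg ψ x) + ∫ x in Ω, ⟪gradient v x, ψ x⟫

def PhiStar {n : ℕ} (Ω : Set (Euc n)) (μΓ : Measure (Euc n)) (nΓ : Euc n → Euc n) (ε : ℝ)
    (w wΓ : Euc n → ℝ) : ℝ≥0∞ :=
  (⨆ ψ : {ψ : Euc n → Euc n // ContDiff ℝ (⊤ : ℕ∞) ψ ∧ HasCompactSupport ψ ∧ ∀ x, ‖ψ x‖ ≤ 1},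
    ENNReal.ofReal ((∫ x in Ω, w x * divg ψ.1 x) - ∫ x, wΓ x * ⟪ψ.1 x, nΓ x⟫ ∂μΓ))
  + ⨆ ψ : {ψ : Euc n → Euc n // ContDiff ℝ (⊤ : ℕ∞) ψ ∧ HasCompactSupport ψ ∧
        ∀ x ∈ frontier Ω, ⟪ψ x, nΓ x⟫ = 0},
    ENNReal.ofReal (ε^2/2 * (2 * ∫ x, wΓ x * tangDiv nΓ ψ.1 x ∂μΓ - ∫ x, ‖ψ.1 x‖^2 ∂μΓ))

def PhiReg {n : ℕ} (Ω : Set (Euc n)) (μΓ : Measure (Euc n)) (nΓ : Euc n → Euc n) (ε : ℝ)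
    (f : Euc n → ℝ) (κ : ℝ) (w wΓ : Euc n → ℝ) : ℝ≥0∞ :=
  sInf {e : ℝ≥0∞ | ∃ G GΓ : Euc n → Euc n,
    HasWeakGradOn w G Ω ∧ MemLp w 2 (volume.restrict Ω) ∧ MemLp G 2 (volume.restrict Ω) ∧
    TraceEq Ω μΓ nΓ w G wΓ ∧
    HasSurfGrad (frontier Ω) μΓ nΓ wΓ GΓ ∧ MemLp wΓ 2 μΓ ∧ MemLp GΓ 2 μΓ ∧
    e = ENNReal.ofReal ((∫ x in Ω, (f (G x) + κ^2/2 * ‖G x‖^2)) +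
          ε^2/2 * ∫ x, ‖GΓ x‖^2 ∂μΓ)}

def HasLipschitzBoundary {d : ℕ} (Ω : Set (Euc (d+1))) : Prop :=
  ∀ x ∈ frontier Ω, ∃ (r : ℝ), 0 < r ∧ ∃ (e : Euc (d+1) ≃ₗᵢ[ℝ] Euc (d+1)) (c : Euc (d+1))
      (L : ℝ≥0) (f : Euc d → ℝ), LipschitzWith L f ∧
    Ω ∩ ball x r = {y | f (WithLp.toLp 2 (fun i : Fin d => e (y - c) i.castSucc)) < e (y - c) (Fin.last d)} ∩ ball x r

def ProperFn {X : Type*} (Ψ : X → EReal) : Prop := (∃ z, Ψ z ≠ ⊤) ∧ ∀ z, Ψ z ≠ ⊥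

def ConvexFn {X : Type*} [AddCommGroup X] [Module ℝ X] (Ψ : X → EReal) : Prop :=
  ∀ z w : X, ∀ t : ℝ, 0 ≤ t → t ≤ 1 →
    Ψ (t • z + (1 - t) • w) ≤ (t : EReal) * Ψ z + ((1 - t : ℝ) : EReal) * Ψ w

def InSubdiff {X : Type*} [NormedAddCommGroup X] [InnerProductSpace ℝ X]
    (Ψ : X → EReal) (z zs : X) : Prop :=
  Ψ z ≠ ⊤ ∧ ∀ w : X, ((⟪zs, w - z⟫ : ℝ) : EReal) + Ψ z ≤ Ψ w

def MoscoConv {X : Type*} [NormedAddCommGroup X] [InnerProductSpace ℝ X]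
    (Ψn : ℕ → X → EReal) (Ψ : X → EReal) : Prop :=
  (∀ (z : X) (zn : ℕ → X),
      (∀ y : X, Tendsto (fun k => (⟪zn k, y⟫ : ℝ)) atTop (𝓝 ⟪z, y⟫)) →
      Ψ z ≤ Filter.liminf (fun k => Ψn k (zn k)) atTop) ∧
  (∀ z : X, Ψ z ≠ ⊤ → ∃ zn : ℕ → X, Tendsto zn atTop (𝓝 z) ∧
      Tendsto (fun k => Ψn k (zn k)) atTop (𝓝 (Ψ z)))

def Euc.init {d : ℕ} (x : Euc (d+1)) : Euc d := WithLp.toLp 2 (fun i : Fin d => x i.castSucc)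

def Euc.snoc {d : ℕ} (ξ : Euc d) (t : ℝ) : Euc (d+1) := WithLp.toLp 2 (Fin.snoc (α := fun _ => ℝ) (fun i => ξ i) t)

def eTV {n : ℕ} (u : Euc n → ℝ) (U : Set (Euc n)) : ℝ≥0∞ :=
  ⨆ ψ : {ψ : Euc n → Euc n // IsTestVF U ψ ∧ ∀ x, ‖ψ x‖ ≤ 1},
    ENNReal.ofReal (∫ x in U, u x * divg ψ.1 x)

def IsBVRep {n : ℕ} (U : Set (Euc n)) (u : Euc n → ℝ) (ν : Measure (Euc n))
    (σ : Euc n → Euc n) : Prop :=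
  (∀ᵐ x ∂ν, ‖σ x‖ = 1) ∧
  ∀ ψ : Euc n → Euc n, IsTestVF U ψ →
    ∫ x in U, u x * divg ψ x = - ∫ x, ⟪σ x, ψ x⟫ ∂ν

/-- if a proper l.s.c. convex function Ψ on a real Hilbert space satisfies
`Ψ(z - π_K(z-w)) + Ψ(w + π_K(z-w)) ≤ Ψ(z) + Ψ(w)` for a closed convex cone K (vertex 0),
then ∂Ψ is K-monotone. -/
theorem stmt4 {X : Type*} [NormedAddCommGroup X] [InnerProductSpace ℝ X] [CompleteSpace X]
    (Ψ : X → EReal) (hProper : ProperFn Ψ) (hLsc : LowerSemicontinuous Ψ)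
    (hConv : ConvexFn Ψ)
    (K : Set X) (hKc : IsClosed K) (hKconv : Convex ℝ K) (hK0 : (0:X) ∈ K)
    (hKcone : ∀ c : ℝ, 0 ≤ c → ∀ x ∈ K, c • x ∈ K)
    (π : X → X) (hπ : ∀ x : X, π x ∈ K ∧ ∀ y ∈ K, ‖x - π x‖ ≤ ‖x - y‖)
    (hsub : ∀ z w : X, Ψ z ≠ ⊤ → Ψ w ≠ ⊤ →
      Ψ (z - π (z - w)) + Ψ (w + π (z - w)) ≤ Ψ z + Ψ w) :
    ∀ z₁ z₁s z₂ z₂s : X, InSubdiff Ψ z₁ z₁s → InSubdiff Ψ z₂ z₂s →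
      0 ≤ ⟪z₁s - z₂s, (z₁ - z₂) - π (z₁ - z₂)⟫ := by
  intro z₁ z₁s z₂ z₂s h1 h2
  set p := π (z₁ - z₂) with hp
  set q := z₁ - z₂ - p with hq
  -- Ψ z₁ and Ψ z₂ are finite
  obtain ⟨a, ha⟩ : ∃ a : ℝ, Ψ z₁ = (a : EReal) := by
    cases h : Ψ z₁ with
    | bot => exact absurd h (hProper.2 z₁)
    | coe a => exact ⟨a, rfl⟩
    | top => exact absurd h h1.1
  obtain ⟨b, hb⟩ : ∃ b : ℝ, Ψ z₂ = (b : EReal) := by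
    cases h : Ψ z₂ with
    | bot => exact absurd h (hProper.2 z₂)
    | coe b => exact ⟨b, rfl⟩
    | top => exact absurd h h2.1
  have hs := hsub z₁ z₂ h1.1 h2.1
  rw [← hp, ha, hb] at hs
  have hA := h1.2 (z₂ + p)
  have hB := h2.2 (z₁ - p)
  rw [ha] at hA; rw [hb] at hB
  -- Ψ (z₁ - p) and Ψ (z₂ + p) are finite
  have hnb1 : Ψ (z₁ - p) ≠ ⊥ := hProper.2 _
  have hnb2 : Ψ (z₂ + p) ≠ ⊥ := hProper.2 _
  have hnt1 : Ψ (z₁ - p) ≠ ⊤ := by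
    intro h
    rw [h] at hs
    rw [EReal.top_add_of_ne_bot hnb2] at hs
    simp at hs
    rw [← EReal.coe_add] at hs
    exact EReal.coe_ne_top _ hs
  have hnt2 : Ψ (z₂ + p) ≠ ⊤ := by
    intro h
    rw [h] at hs
    rw [EReal.add_top_of_ne_bot hnb1] at hs
    simp at hs
    rw [← EReal.coe_add] at hs
    exact EReal.coe_ne_top _ hs
  obtain ⟨c, hc⟩ : ∃ c : ℝ, Ψ (z₁ - p) = (c : EReal) := by
    cases h : Ψ (z₁ - p) with
    | bot => exact absurd h hnb1
    | coe c => exact ⟨c, rfl⟩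
    | top => exact absurd h hnt1
  obtain ⟨d, hd⟩ : ∃ d : ℝ, Ψ (z₂ + p) = (d : EReal) := by
    cases h : Ψ (z₂ + p) with
    | bot => exact absurd h hnb2
    | coe d => exact ⟨d, rfl⟩
    | top => exact absurd h hnt2
  rw [hc, hd] at hs
  rw [hd] at hA
  rw [hc] at hB
  have hA' : ⟪z₁s, z₂ + p - z₁⟫ + a ≤ d := by exact_mod_cast hA
  have hB' : ⟪z₂s, z₁ - p - z₂⟫ + b ≤ c := by exact_mod_cast hB
  have hs' : c + d ≤ a + b := by exact_mod_cast hs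
  have e1 : ⟪z₁s, z₂ + p - z₁⟫ = -⟪z₁s, q⟫ := by
    rw [show z₂ + p - z₁ = -q by rw [hq]; abel, inner_neg_right]
  have e2 : ⟪z₂s, z₁ - p - z₂⟫ = ⟪z₂s, q⟫ := by
    rw [show z₁ - p - z₂ = q by rw [hq]; abel]
  rw [e1] at hA'; rw [e2] at hB'
  rw [inner_sub_left]
  linarith
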